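/- arXiv:math/0502131 — 9 statements merged into one kernel-verified Lean document; each statement's English description precedes it below -/
import Mathlib

section
/- Let λ be a partition that is l-admissible, i.e. no cell of its Young diagram has hook length equal to l. For each row i, let ν_i be the number of cells in row i whose hook length is strictly less than l. Then ν = (ν_1, ν_2, …) is itself a partition, i.e. the sequence ν is weakly decreasing. -/
/-- A partition: a weakly decreasing sequence of naturals (indexed from 1),
eventually zero. -/
structure HookPartition where
  parts : ℕ → ℕ
  antitone : ∀ ⦃i j : ℕ⦄, 1 ≤ i → i ≤ j → parts j ≤ parts i
  finite : ∃ N, ∀ i, N ≤ i → parts i = 0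

namespace HookPartition

/-- The conjugate partition: `conj p j` is the number of rows `i ≥ 1` with `parts i ≥ j`. -/
noncomputable def conj (p : HookPartition) (j : ℕ) : ℕ :=
  Set.ncard {i : ℕ | 1 ≤ i ∧ j ≤ p.parts i}

/-- Hook length of the cell in row `i`, column `j`. -/
noncomputable def hook (p : HookPartition) (i j : ℕ) : ℕ :=
  (p.parts i - j) + (p.conj j - i) + 1

/-- The cell `(i,j)` belongs to the Young diagram of `p`. -/
def cell (p : HookPartition) (i j : ℕ) : Prop :=
  1 ≤ i ∧ 1 ≤ j ∧ j ≤ p.parts i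

/-- `p` is `l`-admissible: no cell has hook length `l`. -/
def admissible (p : HookPartition) (l : ℕ) : Prop :=
  ∀ i j, p.cell i j → p.hook i j ≠ l

open Classical in
/-- Number of cells in row `i` whose hook length is `< l`. -/
noncomputable def smallHooks (p : HookPartition) (l : ℕ) (i : ℕ) : ℕ :=
  ((Finset.Icc 1 (p.parts i)).filter (fun j => p.hook i j < l)).card

end HookPartition

namespace HookPartition

lemma conj_set_finite (p : HookPartition) {j : ℕ} (hj : 1 ≤ j) :
    {i : ℕ | 1 ≤ i ∧ j ≤ p.parts i}.Finite := by
  obtain ⟨N, hN⟩ := p.finite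
  apply Set.Finite.subset (Set.finite_Iio N)
  rintro i ⟨hi1, hij⟩
  simp only [Set.mem_Iio]
  by_contra h
  have := hN i (by omega)
  omega

lemma conj_anti (p : HookPartition) {j j' : ℕ} (hj : 1 ≤ j) (hjj : j ≤ j') :
    p.conj j' ≤ p.conj j := by
  apply Set.ncard_le_ncard _ (p.conj_set_finite hj)
  rintro i ⟨h1, h2⟩; exact ⟨h1, by omega⟩

lemma le_conj (p : HookPartition) {i j : ℕ} (hi : 1 ≤ i) (hj : 1 ≤ j)
    (hij : j ≤ p.parts i) : i ≤ p.conj j := by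
  have hsub : Set.Icc 1 i ⊆ {k : ℕ | 1 ≤ k ∧ j ≤ p.parts k} := by
    rintro k ⟨hk1, hki⟩
    exact ⟨hk1, le_trans hij (p.antitone hk1 hki)⟩
  have h1 := Set.ncard_le_ncard hsub (p.conj_set_finite hj)
  have h2 : (Set.Icc 1 i : Set ℕ).ncard = i := by
    rw [Set.ncard_eq_toFinset_card', Set.toFinset_Icc, Nat.card_Icc]; omega
  rw [h2] at h1
  exact h1

lemma smallHooks_succ_le (p : HookPartition) (l : ℕ) (hadm : p.admissible l)
    {i : ℕ} (hi : 1 ≤ i) : p.smallHooks l (i + 1) ≤ p.smallHooks l i := by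
  classical
  unfold HookPartition.smallHooks
  have hd : p.parts (i + 1) ≤ p.parts i := p.antitone hi (Nat.le_succ i)
  set d := p.parts i - p.parts (i + 1) with hdd
  apply Finset.card_le_card_of_injOn (fun j => j + d)
  · intro j hj
    simp only [Finset.coe_filter, Finset.mem_coe, Set.mem_setOf_eq, Finset.mem_filter, Finset.mem_Icc] at hj ⊢
    obtain ⟨⟨hj1, hjle⟩, hhook⟩ := hj
    refine ⟨⟨by omega, by omega⟩, ?_⟩
    have hc1 : p.conj (j + d) ≤ p.conj j := p.conj_anti hj1 (Nat.le_add_right j d)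
    have hc2 : i + 1 ≤ p.conj j := p.le_conj (by omega) hj1 hjle
    have hne : p.hook i (j + d) ≠ l := hadm i (j + d) ⟨hi, by omega, by omega⟩
    unfold HookPartition.hook at hhook hne ⊢
    omega
  · intro a _ b _ hab
    simpa using hab
  
end HookPartition


/-- If `λ` is `l`-admissible, then the row counts `ν_i` of cells of hook length `< l`
form a weakly decreasing sequence, i.e. a partition. -/
theorem smallHooks_antitone (p : HookPartition) (l : ℕ) (hadm : p.admissible l) :
    ∀ ⦃i j : ℕ⦄, 1 ≤ i → i ≤ j → p.smallHooks l j ≤ p.smallHooks l i := by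
  intro i j hi hij
  induction j, hij using Nat.le_induction with
  | base => exact le_refl _
  | succ n hn ih =>
      exact le_trans (p.smallHooks_succ_le l hadm (le_trans hi hn)) ih
end

section
/- Let k, l be positive integers. If a partition λ is l-admissible (no cell has hook length l), then λ is (kl)-admissible (no cell has hook length kl). -/
/-- A partition: a weakly decreasing sequence of naturals (indexed from 1),
eventually zero. -/
structure NatPartition where
  parts : ℕ → ℕ
  antitone : ∀ ⦃i j : ℕ⦄, 1 ≤ i → i ≤ j → parts j ≤ parts i
  finite : ∃ N, ∀ i, N ≤ i → parts i = 0

namespace NatPartition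

/-- The conjugate partition: `conj p j` is the number of rows `i ≥ 1` with `parts i ≥ j`. -/
noncomputable def conj (p : NatPartition) (j : ℕ) : ℕ :=
  Set.ncard {i : ℕ | 1 ≤ i ∧ j ≤ p.parts i}

/-- Hook length of the cell in row `i`, column `j`. -/
noncomputable def hook (p : NatPartition) (i j : ℕ) : ℕ :=
  (p.parts i - j) + (p.conj j - i) + 1

/-- The cell `(i,j)` belongs to the Young diagram of `p`. -/
def cell (p : NatPartition) (i j : ℕ) : Prop :=
  1 ≤ i ∧ 1 ≤ j ∧ j ≤ p.parts i

/-- `p` is `l`-admissible: no cell has hook length `l`. -/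
def admissible (p : NatPartition) (l : ℕ) : Prop :=
  ∀ i j, p.cell i j → p.hook i j ≠ l

open Classical in
/-- Number of cells in row `i` whose hook length is `< l`. -/
noncomputable def smallHooks (p : NatPartition) (l : ℕ) (i : ℕ) : ℕ :=
  ((Finset.Icc 1 (p.parts i)).filter (fun j => p.hook i j < l)).card

end NatPartition

section Aux

/-- A bound after which all parts vanish, taken positive. -/
lemma NatPartition.exists_bigN (p : NatPartition) : ∃ N, 1 ≤ N ∧ ∀ i, N ≤ i → p.parts i = 0 := by
  obtain ⟨N, hN⟩ := p.finite
  exact ⟨max N 1, le_max_right _ _, fun i hi => hN i (le_trans (le_max_left _ _) hi)⟩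

/-- If membership `j ≤ parts t` is characterized by `t ≤ r`, then `conj j = r`. -/
lemma NatPartition.conj_eq (p : NatPartition) (j r : ℕ)
    (hr : ∀ t, 1 ≤ t → (j ≤ p.parts t ↔ t ≤ r)) : p.conj j = r := by
  have hset : {i : ℕ | 1 ≤ i ∧ j ≤ p.parts i} = Set.Icc 1 r := by
    ext t
    simp only [Set.mem_setOf_eq, Set.mem_Icc]
    constructor
    · rintro ⟨ht, hjt⟩; exact ⟨ht, (hr t ht).mp hjt⟩
    · rintro ⟨ht, htr⟩; exact ⟨ht, (hr t ht).mpr htr⟩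
  rw [NatPartition.conj, hset, ← Finset.coe_Icc, Set.ncard_coe_finset, Nat.card_Icc]
  omega

/-- The Galois-type characterization of the conjugate. -/
lemma NatPartition.conj_char (p : NatPartition) (j : ℕ) (hj : 1 ≤ j) :
    ∀ i, 1 ≤ i → (i ≤ p.conj j ↔ j ≤ p.parts i) := by
  obtain ⟨N, hN1, hN⟩ := p.exists_bigN
  set S : Set ℕ := {i : ℕ | 1 ≤ i ∧ j ≤ p.parts i} with hS
  by_cases hne : S.Nonempty
  · have hbdd : BddAbove S := by
      refine ⟨N, fun t ht => ?_⟩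
      by_contra hc
      push_neg at hc
      have h0 : p.parts t = 0 := hN t (le_of_lt hc)
      have := ht.2
      omega
    set m := sSup S with hm
    have hmem : m ∈ S := Nat.sSup_mem hne hbdd
    have hle : ∀ t ∈ S, t ≤ m := fun t ht => le_csSup hbdd ht
    have hchar : ∀ t, 1 ≤ t → (j ≤ p.parts t ↔ t ≤ m) := by
      intro t ht
      constructor
      · intro hjt; exact hle t ⟨ht, hjt⟩
      · intro htm
        exact le_trans hmem.2 (p.antitone ht htm)
    have hconj : p.conj j = m := p.conj_eq j m hchar
    intro i hi
    rw [hconj]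
    exact (hchar i hi).symm
  · have hconj : p.conj j = 0 := by
      refine p.conj_eq j 0 (fun t ht => ?_)
      constructor
      · intro hjt; exact absurd ⟨ht, hjt⟩ (fun hmem => hne ⟨t, hmem⟩)
      · omega
    intro i hi
    rw [hconj]
    constructor
    · omega
    · intro hjt; exact absurd ⟨hi, hjt⟩ (fun hmem => hne ⟨i, hmem⟩)

/-- Integer form of the hook length of a cell. -/
lemma NatPartition.hook_int (p : NatPartition) (i j : ℕ) (hc : p.cell i j) :
    (p.hook i j : ℤ) =
      ((p.parts i : ℤ) - i) - ((j : ℤ) - 1 - (p.conj j : ℤ)) := by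
  obtain ⟨hi, hj, hji⟩ := hc
  have h2 : i ≤ p.conj j := (p.conj_char j hj i hi).mpr hji
  unfold NatPartition.hook
  omega

/-- The "in" values `parts r - r` and "out" values `j - 1 - conj j` are disjoint. -/
lemma NatPartition.disj (p : NatPartition) (r j : ℕ) (hr : 1 ≤ r) (hj : 1 ≤ j) :
    (p.parts r : ℤ) - r ≠ (j : ℤ) - 1 - (p.conj j : ℤ) := by
  have hc := p.conj_char j hj r hr
  rcases le_or_gt j (p.parts r) with hle | hlt
  · have h1 : r ≤ p.conj j := hc.mpr hle
    omega
  · have h1 : ¬ r ≤ p.conj j := fun hh => absurd (hc.mp hh) (by omega)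
    omega

/-- If `s` is an "out" value below row `i`'s "in" value, there is a cell in row `i`
with hook length `(parts i - i) - s`. -/
lemma NatPartition.exists_hook (p : NatPartition) (i : ℕ) (hi : 1 ≤ i) (s : ℤ)
    (hs : ∀ r : ℕ, 1 ≤ r → (p.parts r : ℤ) - r ≠ s)
    (hle : s + 1 ≤ (p.parts i : ℤ) - i) :
    ∃ j, p.cell i j ∧ (p.hook i j : ℤ) = (p.parts i : ℤ) - i - s := by
  classical
  obtain ⟨N, hN1, hN⟩ := p.exists_bigN
  set P : ℕ → Prop := fun r => 1 ≤ r ∧ s + 1 ≤ (p.parts r : ℤ) - r with hP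
  set b : ℕ := max N (max i ((-s - 1).toNat)) with hbdef
  have hb : ∀ m, P m → m ≤ b := by
    intro m hm
    by_contra hc
    push_neg at hc
    have hNm : p.parts m = 0 := hN m (by omega)
    have := hm.2
    rw [hNm] at this
    have : m ≤ ((-s - 1).toNat) := by omega
    omega
  set r := Nat.findGreatest P b with hrdef
  have hPi : P i := ⟨hi, hle⟩
  have hir : i ≤ r := Nat.le_findGreatest (hb i hPi) hPi
  have hr1 : 1 ≤ r := le_trans hi hir
  have hPr : P r := Nat.findGreatest_spec (hb i hPi) hPi
  have hgr : s + 1 ≤ (p.parts r : ℤ) - r := hPr.2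
  have hsucc : (p.parts (r + 1) : ℤ) - (r + 1) ≤ s - 1 := by
    have hnp : ¬ P (r + 1) := by
      intro hp
      exact Nat.findGreatest_is_greatest (Nat.lt_succ_self r) (hb _ hp) hp
    have h1 : ¬ (s + 1 ≤ (p.parts (r + 1) : ℤ) - (r + 1)) := by
      intro hcon; exact hnp ⟨by omega, hcon⟩
    have h2 := hs (r + 1) (by omega)
    omega
  have hj0 : 0 ≤ s + r := by
    by_contra hcon
    push_neg at hcon
    set t : ℕ := (-s).toNat with htdef
    have htz : (t : ℤ) = -s := by omega
    have ht1 : 1 ≤ t := by omega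
    have htr : r < t := by omega
    rcases le_or_gt N t with hNt | htN
    · have h0 : p.parts t = 0 := hN t hNt
      have := hs t ht1
      rw [h0] at this
      omega
    · have htb : t ≤ b := by omega
      have hPt : P t := by
        refine ⟨ht1, ?_⟩
        have h1 := hs t ht1
        have h2 : (0 : ℤ) ≤ (p.parts t : ℤ) := by positivity
        omega
      exact Nat.findGreatest_is_greatest htr htb hPt
  set j : ℕ := (s + r + 1).toNat with hjdef
  have hjz : (j : ℤ) = s + r + 1 := by omega
  have hj1 : 1 ≤ j := by omega
  have hchar : ∀ t, 1 ≤ t → (j ≤ p.parts t ↔ t ≤ r) := by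
    intro t ht
    constructor
    · intro hjt
      by_contra hc
      push_neg at hc
      have hmono : p.parts t ≤ p.parts (r + 1) := p.antitone (by omega) (by omega)
      omega
    · intro htr
      have hmono : p.parts r ≤ p.parts t := p.antitone ht htr
      omega
  have hconj : p.conj j = r := p.conj_eq j r hchar
  have hcell : p.cell i j := ⟨hi, hj1, (hchar i hi).mpr hir⟩
  refine ⟨j, hcell, ?_⟩
  rw [p.hook_int i j hcell, hconj]
  omega

/-- Chain principle: if `Q 0` holds and `Q k` fails, some consecutive step flips. -/
lemma chain_flip {Q : ℕ → Prop} (k : ℕ) (h0 : Q 0) (hk : ¬ Q k) :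
    ∃ t, t < k ∧ Q t ∧ ¬ Q (t + 1) := by
  induction k with
  | zero => exact absurd h0 hk
  | succ n ih =>
    by_cases hn : Q n
    · exact ⟨n, Nat.lt_succ_self n, hn, hk⟩
    · obtain ⟨t, ht, h1, h2⟩ := ih hn
      exact ⟨t, by omega, h1, h2⟩

end Aux

/-- If `λ` is `l`-admissible then it is `(k*l)`-admissible. -/
theorem admissible_mul (p : NatPartition) (k l : ℕ) (hk : 1 ≤ k) (hl : 1 ≤ l)
    (h : p.admissible l) : p.admissible (k * l) := by
  intro i j hcell heq
  obtain ⟨hi, hj, hji⟩ := hcell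
  have hhook := p.hook_int i j ⟨hi, hj, hji⟩
  set Q : ℕ → Prop := fun t =>
    ∃ r, 1 ≤ r ∧ (p.parts r : ℤ) - r = (p.parts i : ℤ) - i - t * l with hQ
  have hQ0 : Q 0 := ⟨i, hi, by simp⟩
  have hQk : ¬ Q k := by
    rintro ⟨r, hr1, hre⟩
    have hcast : (p.hook i j : ℤ) = (k : ℤ) * l := by rw [heq]; push_cast; ring
    have : (p.parts r : ℤ) - r = (j : ℤ) - 1 - (p.conj j : ℤ) := by
      rw [hre]; omega
    exact p.disj r j hr1 hj this
  obtain ⟨t, htk, ⟨r, hr1, hgr⟩, hnot⟩ := chain_flip k hQ0 hQk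
  have hs : ∀ r' : ℕ, 1 ≤ r' → (p.parts r' : ℤ) - r' ≠ (p.parts r : ℤ) - r - l := by
    intro r' hr' hcon
    apply hnot
    refine ⟨r', hr', ?_⟩
    rw [hcon, hgr]
    push_cast
    ring
  have hle : ((p.parts r : ℤ) - r - l) + 1 ≤ (p.parts r : ℤ) - r := by
    have : (1 : ℤ) ≤ l := by exact_mod_cast hl
    omega
  obtain ⟨j', hcell', hhv⟩ := p.exists_hook r hr1 ((p.parts r : ℤ) - r - l) hs hle
  have : p.hook r j' = l := by omega
  exact h r j' hcell' this
end

section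
/- For each row i of a partition λ, let G_i ⊆ ℕ be the set of nonnegative integers not occurring among the hook lengths of the cells in row i (including 0, which never occurs as a hook length). Then for all rows i ≥ 2 one has G_{i-1} = (d_i + 1 + G_i) ∪ {0}, where d_i = λ_{i-1} − λ_i and d + 1 + G means the translate {d+1+x : x ∈ G}. -/
/-- A partition: a weakly decreasing sequence of naturals (indexed from 1),
eventually zero. -/
structure YPartition where
  parts : ℕ → ℕ
  antitone : ∀ ⦃i j : ℕ⦄, 1 ≤ i → i ≤ j → parts j ≤ parts i
  finite : ∃ N, ∀ i, N ≤ i → parts i = 0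

namespace YPartition

/-- The conjugate partition: `conj p j` is the number of rows `i ≥ 1` with `parts i ≥ j`. -/
noncomputable def conj (p : YPartition) (j : ℕ) : ℕ :=
  Set.ncard {i : ℕ | 1 ≤ i ∧ j ≤ p.parts i}

/-- Hook length of the cell in row `i`, column `j`. -/
noncomputable def hook (p : YPartition) (i j : ℕ) : ℕ :=
  (p.parts i - j) + (p.conj j - i) + 1

/-- The cell `(i,j)` belongs to the Young diagram of `p`. -/
def cell (p : YPartition) (i j : ℕ) : Prop :=
  1 ≤ i ∧ 1 ≤ j ∧ j ≤ p.parts i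

/-- `p` is `l`-admissible: no cell has hook length `l`. -/
def admissible (p : YPartition) (l : ℕ) : Prop :=
  ∀ i j, p.cell i j → p.hook i j ≠ l

open Classical in
/-- Number of cells in row `i` whose hook length is `< l`. -/
noncomputable def smallHooks (p : YPartition) (l : ℕ) (i : ℕ) : ℕ :=
  ((Finset.Icc 1 (p.parts i)).filter (fun j => p.hook i j < l)).card

end YPartition

/-- `G p i` is the set of naturals not occurring as a hook length in row `i`. -/
def G (p : YPartition) (i : ℕ) : Set ℕ :=
  {m : ℕ | ∀ j, p.cell i j → p.hook i j ≠ m}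

namespace YPartition

lemma conj_set_finite (p : YPartition) {j : ℕ} (hj : 1 ≤ j) :
    {k : ℕ | 1 ≤ k ∧ j ≤ p.parts k}.Finite := by
  obtain ⟨N, hN⟩ := p.finite
  apply (Set.finite_Iio N).subset
  intro k hk
  simp only [Set.mem_Iio]
  by_contra h
  have := hN k (le_of_not_gt h)
  have := hk.2
  omega

lemma conj_ge (p : YPartition) {i j : ℕ} (hi : 1 ≤ i) (hj : 1 ≤ j)
    (hji : j ≤ p.parts i) : i ≤ p.conj j := by
  have hsub : Set.Icc 1 i ⊆ {k : ℕ | 1 ≤ k ∧ j ≤ p.parts k} := by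
    intro k hk
    exact ⟨hk.1, le_trans hji (p.antitone hk.1 hk.2)⟩
  have h := Set.ncard_le_ncard hsub (p.conj_set_finite hj)
  have hIcc : (Set.Icc 1 i).ncard = i := by
    rw [← Finset.coe_Icc, Set.ncard_coe_finset, Nat.card_Icc]
    omega
  unfold conj
  omega

lemma conj_eq (p : YPartition) {i j : ℕ} (hi : 2 ≤ i) (h1 : p.parts i < j)
    (h2 : j ≤ p.parts (i - 1)) : p.conj j = i - 1 := by
  have hj : 1 ≤ j := by omega
  have hset : {k : ℕ | 1 ≤ k ∧ j ≤ p.parts k} = Set.Icc 1 (i - 1) := by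
    ext k
    constructor
    · rintro ⟨hk1, hk2⟩
      refine ⟨hk1, ?_⟩
      by_contra h
      have : i ≤ k := by omega
      have := p.antitone (by omega : 1 ≤ i) this
      omega
    · rintro ⟨hk1, hk2⟩
      exact ⟨hk1, le_trans h2 (p.antitone hk1 hk2)⟩
  unfold conj
  rw [hset, ← Finset.coe_Icc, Set.ncard_coe_finset, Nat.card_Icc]
  omega

end YPartition

/-- `G_{i-1} = (d_i + 1 + G_i) ∪ {0}` with `d_i = λ_{i-1} - λ_i`. -/
theorem G_recurrence (p : YPartition) (i : ℕ) (hi : 2 ≤ i) :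
    G p (i - 1) =
      ((fun x => (p.parts (i - 1) - p.parts i) + 1 + x) '' G p i) ∪ {0} := by
  have hii : (1:ℕ) ≤ i - 1 := by omega
  have hle : p.parts i ≤ p.parts (i - 1) := p.antitone hii (by omega)
  set d := p.parts (i - 1) - p.parts i with hd
  have hi1 : i - 1 + 1 = i := by omega
  -- hook in row i-1 at column j ≤ parts i equals d + 1 + hook in row i
  have hook_lo : ∀ j, 1 ≤ j → j ≤ p.parts i →
      p.hook (i - 1) j = d + 1 + p.hook i j := by
    intro j hj1 hj2
    have hc := p.conj_ge (by omega : 1 ≤ i) hj1 hj2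
    unfold YPartition.hook
    omega
  have hook_hi : ∀ j, p.parts i < j → j ≤ p.parts (i - 1) →
      p.hook (i - 1) j = p.parts (i - 1) - j + 1 := by
    intro j h1 h2
    have hc := p.conj_eq hi h1 h2
    unfold YPartition.hook
    omega
  ext m
  simp only [Set.mem_union, Set.mem_image, Set.mem_singleton_iff]
  constructor
  · intro hm
    rcases Nat.eq_zero_or_pos m with h0 | h0
    · right; exact h0
    left
    -- first, m cannot be in {1,...,d}
    have hmd : d + 1 ≤ m := by
      by_contra h
      have hm_le : m ≤ d := by omega
      set j := p.parts (i - 1) + 1 - m with hjdef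
      have hj1 : p.parts i < j := by omega
      have hj2 : j ≤ p.parts (i - 1) := by omega
      have hcell : p.cell (i - 1) j := ⟨hii, by omega, hj2⟩
      have := hm j hcell
      rw [hook_hi j hj1 hj2] at this
      omega
    refine ⟨m - (d + 1), ?_, by omega⟩
    intro j hcj hjm
    have hcell : p.cell (i - 1) j := ⟨hii, hcj.2.1, le_trans hcj.2.2 hle⟩
    have := hm j hcell
    rw [hook_lo j hcj.2.1 hcj.2.2] at this
    omega
  · rintro (⟨x, hx, rfl⟩ | rfl)
    · intro j hcell
      rcases le_or_gt j (p.parts i) with hj | hj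
      · rw [hook_lo j hcell.2.1 hj]
        have := hx j ⟨by omega, hcell.2.1, hj⟩
        omega
      · have hj2 := hcell.2.2
        rw [hook_hi j hj hj2]
        omega
    · intro j hcell
      unfold YPartition.hook
      omega
end

section
/- Let λ be a partition whose Young diagram fits exactly in an r × (e−r) rectangle, i.e. λ_1 = e−r and λ has exactly r nonzero parts. Then for every divisor d of e−1, some cell of λ has hook length equal to d; in particular λ is not d-admissible for any divisor d of e−1. -/
/-- If `λ` fits exactly in an `r × (e-r)` rectangle, then for every positive divisor
`d` of `e-1` some cell of `λ` has hook length `d`; in particular `λ` is not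
`d`-admissible. -/
theorem hook_divisor_of_full_rectangle (p : YPartition) (e r : ℕ)
    (hr : 1 ≤ r) (hre : r < e)
    (h1 : p.parts 1 = e - r) (hrpos : 1 ≤ p.parts r)
    (hlen : ∀ i, r < i → p.parts i = 0) :
    ∀ d, 0 < d → d ∣ e - 1 →
      (∃ i j, p.cell i j ∧ p.hook i j = d) ∧ ¬ p.admissible d := by
  intro d hd hdvd
  -- beta numbers
  obtain ⟨f, hfe⟩ : ∃ f : ℕ → ℕ, ∀ k, f k = p.parts k + (r - k) := ⟨_, fun _ => rfl⟩
  have hanti : ∀ a b : ℕ, 1 ≤ a → a ≤ b → b ≤ r → f b + (b - a) ≤ f a := by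
    intro a b h1 h2 h3
    have := p.antitone h1 h2
    rw [hfe, hfe]
    omega
  have hpos : ∀ k, 1 ≤ k → k ≤ r → 1 ≤ f k := by
    intro k h1 h2
    have := p.antitone h1 h2
    rw [hfe]
    omega
  have hf1 : f 1 = e - 1 := by
    rw [hfe, h1]
    omega
  -- key lemma: if f i ≥ d and f i - d is not a beta number, there is a hook of length d
  have key : ∀ i, 1 ≤ i → i ≤ r → d ≤ f i →
      (∀ k, 1 ≤ k → k ≤ r → f k ≠ f i - d) →
      ∃ a b, p.cell a b ∧ p.hook a b = d := by
    intro i hi1 hir hdle hnot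
    obtain ⟨b, hb⟩ : ∃ b, b = f i - d := ⟨_, rfl⟩
    have hbfi : b < f i := by omega
    have hSne : i ∈ (Finset.Icc 1 r).filter (fun k => b < f k) := by
      simp [hi1, hir, hbfi]
    obtain ⟨m, hm⟩ : ∃ m, m = ((Finset.Icc 1 r).filter (fun k => b < f k)).max' ⟨i, hSne⟩ :=
      ⟨_, rfl⟩
    have hmS : m ∈ (Finset.Icc 1 r).filter (fun k => b < f k) := by
      rw [hm]; exact Finset.max'_mem _ _
    have hm1 : 1 ≤ m ∧ m ≤ r ∧ b < f m := by
      simp only [Finset.mem_filter, Finset.mem_Icc] at hmS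
      exact ⟨hmS.1.1, hmS.1.2, hmS.2⟩
    have him : i ≤ m := by
      rw [hm]; exact Finset.le_max' _ i hSne
    have hdown : ∀ k, m < k → k ≤ r → f k < b := by
      intro k h1 h2
      have hk1 : 1 ≤ k := by omega
      have hle : ¬ (b < f k) := by
        intro h
        have hkS : k ∈ (Finset.Icc 1 r).filter (fun k => b < f k) := by
          simp only [Finset.mem_filter, Finset.mem_Icc]
          exact ⟨⟨hk1, h2⟩, h⟩
        have := Finset.le_max' _ k hkS
        omega
      have hne : f k ≠ b := by rw [hb]; exact hnot k hk1 h2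
      omega
    -- r ≤ b + m
    have hrm : r ≤ b + m := by
      rcases Nat.lt_or_ge m r with h | h
      · have h1 : f (m+1) < b := hdown (m+1) (by omega) (by omega)
        have h2 : f r + (r - (m+1)) ≤ f (m+1) := hanti (m+1) r (by omega) (by omega) le_rfl
        have h3 : 1 ≤ f r := hpos r hr le_rfl
        omega
      · omega
    obtain ⟨j, hj⟩ : ∃ j, j = b + m + 1 - r := ⟨_, rfl⟩
    have hj1 : 1 ≤ j := by omega
    -- row bounds: for i' in [1,m], j ≤ parts i'
    have hrow : ∀ i', 1 ≤ i' → i' ≤ m → j ≤ p.parts i' := by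
      intro i' h1 h2
      have h3 : f m + (m - i') ≤ f i' := hanti i' m h1 h2 hm1.2.1
      have h4 : b < f m := hm1.2.2
      have h5 : i' ≤ r := le_trans h2 hm1.2.1
      simp only [hfe] at h3 h4
      omega
    have hconj : p.conj j = m := by
      have hset : {i' : ℕ | 1 ≤ i' ∧ j ≤ p.parts i'} = Set.Icc 1 m := by
        ext i'
        simp only [Set.mem_setOf_eq, Set.mem_Icc]
        constructor
        · rintro ⟨h1, h2⟩
          refine ⟨h1, ?_⟩
          by_contra hgt
          push_neg at hgt
          rcases Nat.lt_or_ge r i' with hri' | hri'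
          · have := hlen i' hri'
            omega
          · -- m < i' ≤ r
            have h3 : f i' + (i' - (m+1)) ≤ f (m+1) := hanti (m+1) i' (by omega) (by omega) hri'
            have h4 : f (m+1) < b := hdown (m+1) (by omega) (by omega)
            simp only [hfe] at h3 h4
            omega
        · rintro ⟨h1, h2⟩
          exact ⟨h1, hrow i' h1 h2⟩
      rw [YPartition.conj, hset, ← Finset.coe_Icc, Set.ncard_coe_finset, Nat.card_Icc]
      omega
    refine ⟨i, j, ⟨hi1, hj1, hrow i hi1 him⟩, ?_⟩
    have hji : j ≤ p.parts i := hrow i hi1 him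
    have hfi : p.parts i + (r - i) = b + d := by
      simp only [hfe] at hdle hb
      omega
    rw [YPartition.hook, hconj]
    omega
  -- descent
  have descent : ∀ k, k ≤ (e-1)/d →
      ((∃ i, 1 ≤ i ∧ i ≤ r ∧ f i = (e-1) - k*d) ∨ ∃ a b, p.cell a b ∧ p.hook a b = d) := by
    intro k
    induction k with
    | zero => intro _; exact Or.inl ⟨1, le_rfl, hr, by simp [hf1]⟩
    | succ n ih =>
      intro hk
      rcases ih (by omega) with ⟨i, hi1, hir, hfi⟩ | h
      · have hnd : (n+1) * d ≤ e - 1 := (Nat.le_div_iff_mul_le hd).mp hk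
        have hdle : d ≤ f i := by
          rw [hfi]
          exact Nat.le_sub_of_add_le (by nlinarith)
        by_cases hex : ∃ k', 1 ≤ k' ∧ k' ≤ r ∧ f k' = f i - d
        · obtain ⟨k', hk1, hk2, hk3⟩ := hex
          refine Or.inl ⟨k', hk1, hk2, ?_⟩
          have hnd' : (n+1) * d = n * d + d := by ring
          rw [hk3, hfi, Nat.sub_sub, hnd']
        · push_neg at hex
          exact Or.inr (key i hi1 hir hdle (fun k h1 h2 => hex k h1 h2))
      · exact Or.inr h
  have hfin : ∃ a b, p.cell a b ∧ p.hook a b = d := by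
    rcases descent ((e-1)/d) le_rfl with ⟨i, hi1, hir, hfi⟩ | h
    · exfalso
      have hdd : (e-1)/d * d = e - 1 := Nat.div_mul_cancel hdvd
      rw [hdd] at hfi
      simp at hfi
      have := hpos i hi1 hir
      omega
    · exact h
  refine ⟨hfin, ?_⟩
  intro hadm
  obtain ⟨a, b, hc, hh⟩ := hfin
  exact hadm a b hc hh
end

section
/- Let δ: ℕ → ℕ satisfy C(δ(x),2) ≤ x < C(δ(x)+1,2) with C(k,2)=k(k−1)/2. Order ℕ² via the injection (x,σ) ↦ (δ(x)+σ, x−C(δ(x),2), σ) into ℕ³ with lexicographic order. Then for all (x,σ) ∈ ℕ², every nonzero integer μ with x + μ·δ(x) ≥ 0 satisfies (x + μ·δ(x), σ − μ) < (x, σ) whenever σ − μ ≥ 0. -/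
def T (k : ℕ) : ℕ := k * (k - 1) / 2
lemma Tsucc (k : ℕ) : T (k + 1) = T k + k := by
  unfold T
  rw [← Nat.choose_two_right, ← Nat.choose_two_right,
    show (2:ℕ) = 1 + 1 from rfl, Nat.choose_succ_succ, Nat.choose_one_right]
  simp only [Nat.succ_eq_add_one]
  omega
lemma Tadd (a b : ℕ) : T (a + b) = T a + a * b + T b := by
  induction b with
  | zero => simp [T]
  | succ b ih =>
    rw [show a + (b+1) = (a+b)+1 from rfl, Tsucc, ih, Tsucc, Nat.mul_succ]
    omega
lemma Tmono {a b : ℕ} (h : a ≤ b) : T a ≤ T b := by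
  obtain ⟨c, rfl⟩ := Nat.exists_eq_add_of_le h
  rw [Tadd, add_assoc]; exact Nat.le_add_right _ _
lemma Ttwo (m : ℕ) : 2 * T m + m = m * m := by
  induction m with
  | zero => simp [T]
  | succ m ih => rw [Tsucc]; nlinarith [ih]


/-- The triple associated to `(x, σ)` by the injection into `ℕ³`. -/
def toTriple (δ : ℕ → ℕ) (x σ : ℕ) : ℕ × ℕ × ℕ :=
  (δ x + σ, x - δ x * (δ x - 1) / 2, σ)

/-- Strict lexicographic order on triples of naturals. -/
def lex3 (a b : ℕ × ℕ × ℕ) : Prop :=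
  a.1 < b.1 ∨ (a.1 = b.1 ∧ (a.2.1 < b.2.1 ∨ (a.2.1 = b.2.1 ∧ a.2.2 < b.2.2)))

/-- For every `(x,σ)` and nonzero integer `μ` with `x + μ·δ(x) ≥ 0` and `σ - μ ≥ 0`,
one has `(x + μ·δ(x), σ - μ) < (x, σ)` in the order induced by the injection. -/
theorem key_order_lemma (δ : ℕ → ℕ)
    (hδ : ∀ n, 1 ≤ δ n ∧ δ n * (δ n - 1) / 2 ≤ n ∧ n < δ n * (δ n + 1) / 2) :
    ∀ (x σ : ℕ) (μ : ℤ), μ ≠ 0 → 0 ≤ (x : ℤ) + μ * (δ x : ℤ) →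
      0 ≤ (σ : ℤ) - μ →
      lex3 (toTriple δ ((( x : ℤ) + μ * (δ x : ℤ)).toNat) (((σ : ℤ) - μ).toNat))
        (toTriple δ x σ) := by
  intro x σ μ hμ hx hσ
  -- repackage hδ using T
  have hTlow : ∀ n, T (δ n) ≤ n := fun n => (hδ n).2.1
  have hTup : ∀ n, n < T (δ n) + δ n := by
    intro n
    have h3 := (hδ n).2.2
    have e : δ n * (δ n + 1) / 2 = T (δ n + 1) := by
      unfold T; rw [Nat.add_sub_cancel, Nat.mul_comm]
    rw [e, Tsucc] at h3; exact h3
  have hδpos : ∀ n, 1 ≤ δ n := fun n => (hδ n).1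
  have hdlt : ∀ n c, n < T c → δ n < c := by
    intro n c h
    by_contra hc
    push_neg at hc
    have h1 := Tmono hc
    have h2 := hTlow n
    omega
  set k := δ x with hk
  rcases lt_trichotomy μ 0 with hneg | rfl | hpos
  · -- μ = -m, m ≥ 1
    obtain ⟨m, rfl⟩ : ∃ m : ℕ, μ = -(m : ℤ) := ⟨(-μ).toNat, by omega⟩
    have hm1 : 1 ≤ m := by omega
    have hmk : m * k ≤ x := by
      have : ((m * k : ℕ) : ℤ) ≤ (x : ℤ) := by push_cast; nlinarith
      exact_mod_cast this
    have ex : (((x : ℤ) + -(m:ℤ) * (k : ℤ)).toNat) = x - m * k := by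
      have e1 : ((x : ℤ) + -(m:ℤ) * (k : ℤ)) = ((x - m * k : ℕ) : ℤ) := by
        push_cast [hmk]; ring
      rw [e1, Int.toNat_natCast]
    have eσ : (((σ : ℤ) - -(m:ℤ)).toNat) = σ + m := by omega
    rw [ex, eσ]
    set x' := x - m * k with hx'
    have hxeq : x' + m * k = x := Nat.sub_add_cancel hmk
    -- m ≤ k - m : 2m ≤ k
    have h2m : 2 * m ≤ k := by
      by_contra hcon
      push_neg at hcon
      have : (k + 1) * k ≤ 2 * m * k :=
        Nat.mul_le_mul_right k (by omega)
      have hub : x < T k + k := hTup x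
      have h2 := Ttwo k
      have h3 := Ttwo (k+1)
      rw [Tsucc] at h3
      nlinarith [hmk]
    set j := k - m with hj
    have hkj : k = j + m := by omega
    -- bound: x' < T (j+1)
    have hxb : x' < T (j + 1) := by
      have hub : x < T k + k := hTup x
      have e1 : T (k+1) = T (j+1) + (j+1) * m + T m := by
        rw [show k + 1 = (j+1) + m by omega, Tadd]
      have e2 : m * k = m * j + m * m := by rw [hkj]; ring
      have e3 := Ttwo m
      have e4 : (j+1) * m = j * m + m := by ring
      have e5 : m * j = j * m := Nat.mul_comm m j
      have e6 : m ≤ m * m := Nat.le_mul_of_pos_left m (by omega)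
      rw [Tsucc] at e1
      omega
    have hk' : δ x' ≤ j := by
      have := hdlt x' (j + 1) hxb
      omega
    have hTj' := hTlow x'
    rcases eq_or_lt_of_le hk' with heq | hlt
    · -- δ x' = j : compare second coordinates
      right
      constructor
      · simp only [toTriple]; omega
      · left
        simp only [toTriple]
        rw [← hk, heq]
        show x' - T j < x - T k
        have eT : T k = T j + j * m + T m := by rw [hkj, Tadd]
        have e2 : m * k = m * j + m * m := by rw [hkj]; ring
        have e3 := Ttwo m
        have e5 : m * j = j * m := Nat.mul_comm m j
        have hTj : T j ≤ x' := by rw [← heq]; exact hTlow x'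
        have hTk : T k ≤ x := hTlow x
        omega
    · left
      simp only [toTriple]
      rw [← hk]
      show δ x' + (σ + m) < k + σ
      omega
  · exact absurd rfl hμ
  · -- μ = m ≥ 1
    obtain ⟨m, rfl⟩ : ∃ m : ℕ, μ = (m : ℤ) := ⟨μ.toNat, by omega⟩
    have hm1 : 1 ≤ m := by omega
    have hmσ : m ≤ σ := by omega
    have ex : (((x : ℤ) + (m:ℤ) * (k : ℤ)).toNat) = x + m * k := by
      have e1 : ((x : ℤ) + (m:ℤ) * (k : ℤ)) = ((x + m * k : ℕ) : ℤ) := by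
        push_cast; ring
      rw [e1, Int.toNat_natCast]
    have eσ : (((σ : ℤ) - (m:ℤ)).toNat) = σ - m := by omega
    rw [ex, eσ]
    set x' := x + m * k with hx'
    have hxb : x' < T (k + m + 1) := by
      have hub : x < T k + k := hTup x
      have e1 : T (k + m + 1) = T (k+1) + (k+1) * m + T m := by
        rw [show k + m + 1 = (k+1) + m by omega, Tadd]
      have e4 : (k+1) * m = k * m + m := by ring
      have e5 : m * k = k * m := Nat.mul_comm m k
      rw [Tsucc] at e1
      rw [Tsucc] at e1 ⊢
      omega
    have hk' : δ x' ≤ k + m := by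
      have := hdlt x' (k + m + 1) hxb
      omega
    rcases eq_or_lt_of_le hk' with heq | hlt
    · right
      constructor
      · simp only [toTriple]; rw [← hk, heq]; omega
      · -- second coordinates
        have eT : T (k + m) = T k + k * m + T m := Tadd k m
        have e5 : m * k = k * m := Nat.mul_comm m k
        have hTkm : T (k + m) ≤ x' := by rw [← heq]; exact hTlow x'
        have hTk : T k ≤ x := hTlow x
        rcases Nat.lt_or_ge m 2 with hm2 | hm2
        · -- m = 1: second equal, third decreases
          right
          constructor
          · simp only [toTriple]; rw [← hk, heq]
            show x' - T (k + m) = x - T k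
            have : m = 1 := by omega
            subst this
            have : T 1 = 0 := by simp [T]
            omega
          · simp only [toTriple]; omega
        · left
          simp only [toTriple]; rw [← hk, heq]
          show x' - T (k + m) < x - T k
          have hTm : 1 ≤ T m := by
            have := Tmono hm2
            have : T 2 = 1 := by simp [T]
            omega
          omega
    · left
      simp only [toTriple]
      rw [← hk]
      show δ x' + (σ - m) < k + σ
      omega
end

section
/- The order on ℕ² defined by comparing (δ(x)+σ, x−C(δ(x),2), σ) lexicographically is monotone in both coordinates: if x ≤ x' then (x,σ) ≤ (x',σ), and if σ ≤ σ' then (x,σ) ≤ (x,σ'). -/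
/-- Reflexive closure of the lexicographic order. -/
def le3 (a b : ℕ × ℕ × ℕ) : Prop := lex3 a b ∨ a = b

lemma tri_le (k m : ℕ) (h : k < m) : k * (k + 1) / 2 ≤ m * (m - 1) / 2 := by
  apply Nat.div_le_div_right
  have hk : k ≤ m - 1 := Nat.le_sub_one_of_lt h
  have hk1 : k + 1 ≤ m := h
  calc k * (k + 1) ≤ (m - 1) * m := Nat.mul_le_mul hk hk1
    _ = m * (m - 1) := Nat.mul_comm _ _

lemma delta_mono (δ : ℕ → ℕ)
    (hδ : ∀ n, 1 ≤ δ n ∧ δ n * (δ n - 1) / 2 ≤ n ∧ n < δ n * (δ n + 1) / 2)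
    {x x' : ℕ} (h : x ≤ x') : δ x ≤ δ x' := by
  by_contra hlt
  push_neg at hlt
  have h1 := (hδ x').2.2
  have h2 := (hδ x).2.1
  have := tri_le (δ x') (δ x) hlt
  omega

/-- The order on `ℕ²` is monotone in both coordinates. -/
theorem order_monotone (δ : ℕ → ℕ)
    (hδ : ∀ n, 1 ≤ δ n ∧ δ n * (δ n - 1) / 2 ≤ n ∧ n < δ n * (δ n + 1) / 2) :
    (∀ x x' σ : ℕ, x ≤ x' → le3 (toTriple δ x σ) (toTriple δ x' σ)) ∧
    (∀ x σ σ' : ℕ, σ ≤ σ' → le3 (toTriple δ x σ) (toTriple δ x σ')) := by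
  constructor
  · intro x x' σ h
    have hd := delta_mono δ hδ h
    rcases lt_or_eq_of_le hd with hd | hd
    · left; left; simp [toTriple]; omega
    · rcases lt_or_eq_of_le h with h | h
      · left; right
        refine ⟨by simp [toTriple, hd], Or.inl ?_⟩
        have h2 := (hδ x).2.1
        have key : δ x * (δ x - 1) / 2 = δ x' * (δ x' - 1) / 2 := by rw [hd]
        simp only [toTriple]
        omega
      · right; simp [toTriple, h]
  · intro x σ σ' h
    rcases lt_or_eq_of_le h with h | h
    · left; left; simp [toTriple]; omega
    · right; simp [toTriple, h]
end

section
/- With δ(x) the unique k ≥ 1 satisfying k(k−1)/2 ≤ x < k(k+1)/2, and Q(p,σ) := (n−p) + (δ(n−p)+σ)(m+2σ) − σ(σ+1) for fixed integers n and m with m + σ ≥ 0: for every integer μ ≠ 0, setting r = δ(n−p), one has Q(p,σ) − Q(p+μr, σ+μ) + sgn(μ) + (r−1)μ ≥ 0 (whenever n−p−μr ≥ 0 and σ+μ ≥ 0). Equivalently, if q > Q(p,σ) then q + sgn(μ) + (r−1)μ > Q(p+μr, σ+μ). -/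
/-- `Q(x, σ) = x + (δ(x) + σ)(m + 2σ) - σ(σ+1)` where `x = n - p`. -/
def Qz (δ : ℕ → ℕ) (m : ℤ) (x : ℕ) (σ : ℤ) : ℤ :=
  (x : ℤ) + ((δ x : ℤ) + σ) * (m + 2 * σ) - σ * (σ + 1)

lemma delta_bounds_int (δ : ℕ → ℕ)
    (hδ : ∀ n, 1 ≤ δ n ∧ δ n * (δ n - 1) / 2 ≤ n ∧ n < δ n * (δ n + 1) / 2) (x : ℕ) :
    1 ≤ (δ x : ℤ) ∧ (δ x : ℤ) * ((δ x : ℤ) - 1) ≤ 2 * x ∧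
      2 * (x : ℤ) < (δ x : ℤ) * ((δ x : ℤ) + 1) := by
  obtain ⟨h1, h2, h3⟩ := hδ x
  have e1 : Even (δ x * (δ x - 1)) := by
    rcases Nat.even_or_odd (δ x) with h | h
    · exact h.mul_right _
    · exact (Nat.Odd.sub_odd h odd_one).mul_left _
  have e2 : Even (δ x * (δ x + 1)) := Nat.even_mul_succ_self (δ x)
  obtain ⟨c1, hc1⟩ := e1
  obtain ⟨c2, hc2⟩ := e2
  have n1 : δ x * (δ x - 1) ≤ 2 * x := by omega
  have n2 : 2 * x < δ x * (δ x + 1) := by omega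
  zify [h1] at n1
  exact ⟨by exact_mod_cast h1, n1, by exact_mod_cast n2⟩

lemma key_arith (X r d σ m μ c : ℤ)
    (hM : 0 ≤ m + 2 * σ + 2 * μ) (hd : d ≤ r - μ) (hc : 0 ≤ c + μ ^ 2) :
    0 ≤ (X + (r + σ) * (m + 2 * σ) - σ * (σ + 1))
      - ((X - μ * r) + (d + (σ + μ)) * (m + 2 * (σ + μ)) - (σ + μ) * ((σ + μ) + 1))
      + c + (r - 1) * μ := by
  nlinarith [mul_nonneg hM (by linarith : (0:ℤ) ≤ r - μ - d)]

/-- The key inequality in the spectral-sequence induction: with `r = δ(n-p)`,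
`Q(p,σ) - Q(p + μr, σ + μ) + sgn(μ) + (r-1)μ ≥ 0`. -/
theorem Q_key_inequality (δ : ℕ → ℕ)
    (hδ : ∀ n, 1 ≤ δ n ∧ δ n * (δ n - 1) / 2 ≤ n ∧ n < δ n * (δ n + 1) / 2)
    (n p σ : ℕ) (m μ : ℤ) (hp : p ≤ n) (hμ : μ ≠ 0)
    (hx : 0 ≤ ((n - p : ℕ) : ℤ) - μ * (δ (n - p) : ℤ))
    (hσ : 0 ≤ (σ : ℤ) + μ)
    (hm : 0 ≤ m + (σ : ℤ))
    (hm' : 0 ≤ m + (σ : ℤ) + μ) :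
    0 ≤ Qz δ m (n - p) σ
        - Qz δ m ((((n - p : ℕ) : ℤ) - μ * (δ (n - p) : ℤ)).toNat) ((σ : ℤ) + μ)
        + (if 0 < μ then (1 : ℤ) else -1)
        + ((δ (n - p) : ℤ) - 1) * μ := by
  obtain ⟨hr1, hr2, hr3⟩ := delta_bounds_int δ hδ (n - p)
  obtain ⟨hd1, hd2, hd3⟩ :=
    delta_bounds_int δ hδ ((((n - p : ℕ) : ℤ) - μ * (δ (n - p) : ℤ)).toNat)
  rw [Int.toNat_of_nonneg hx] at hd2 hd3
  have hM : 0 ≤ m + 2 * (σ : ℤ) + 2 * μ := by linarith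
  -- notation
  set X : ℤ := ((n - p : ℕ) : ℤ) with hX
  set r : ℤ := (δ (n - p) : ℤ) with hr
  set d : ℤ := (δ ((X - μ * r).toNat) : ℤ) with hd
  have hrμ : 1 ≤ r - μ := by
    rcases hμ.lt_or_gt with h | h
    · linarith
    · have hμr : μ * r ≤ X := by linarith [hx]
      nlinarith
  have hdle : d ≤ r - μ := by
    by_contra hcon
    push_neg at hcon
    have hle : r - μ + 1 ≤ d := by linarith
    have hμμ : 0 ≤ μ * (μ - 1) := by
      rcases le_or_gt 1 μ with h | h
      · nlinarith
      · nlinarith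
    nlinarith [mul_nonneg (by linarith : (0:ℤ) ≤ d - (r - μ + 1))
        (by linarith : (0:ℤ) ≤ d + (r - μ))]
  simp only [Qz]
  rw [Int.toNat_of_nonneg hx]
  rcases hμ.lt_or_gt with h | h
  · rw [if_neg (by linarith)]
    have hμ2 : (1:ℤ) ≤ μ ^ 2 := by nlinarith
    linarith [key_arith X r d σ m μ (-1) hM hdle (by linarith)]
  · rw [if_pos h]
    linarith [key_arith X r d σ m μ 1 hM hdle (by positivity)]
end

section
/- Let λ be a partition with at most r parts, each part at most e−r, and suppose λ is l-admissible. Let (a_i) be defined by a_1 = 1 and a_{i+1} = min(a_i + l − ν_{a_i}, r+1), where ν_i is the number of cells of hook length < l in row i of λ, and let A be the largest index with a_A ≤ r. Then for every i ≤ A, λ_{a_i} = Σ_{i ≤ j ≤ A} ν_{a_j}. -/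
/-- A partition: a weakly decreasing sequence of naturals (indexed from 1),
eventually zero. -/
structure IdxPartition where
  parts : ℕ → ℕ
  antitone : ∀ ⦃i j : ℕ⦄, 1 ≤ i → i ≤ j → parts j ≤ parts i
  finite : ∃ N, ∀ i, N ≤ i → parts i = 0

namespace IdxPartition

/-- The conjugate partition: `conj p j` is the number of rows `i ≥ 1` with `parts i ≥ j`. -/
noncomputable def conj (p : IdxPartition) (j : ℕ) : ℕ :=
  Set.ncard {i : ℕ | 1 ≤ i ∧ j ≤ p.parts i}

/-- Hook length of the cell in row `i`, column `j`. -/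
noncomputable def hook (p : IdxPartition) (i j : ℕ) : ℕ :=
  (p.parts i - j) + (p.conj j - i) + 1

/-- The cell `(i,j)` belongs to the Young diagram of `p`. -/
def cell (p : IdxPartition) (i j : ℕ) : Prop :=
  1 ≤ i ∧ 1 ≤ j ∧ j ≤ p.parts i

/-- `p` is `l`-admissible: no cell has hook length `l`. -/
def admissible (p : IdxPartition) (l : ℕ) : Prop :=
  ∀ i j, p.cell i j → p.hook i j ≠ l

open Classical in
/-- Number of cells in row `i` whose hook length is `< l`. -/
noncomputable def smallHooks (p : IdxPartition) (l : ℕ) (i : ℕ) : ℕ :=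
  ((Finset.Icc 1 (p.parts i)).filter (fun j => p.hook i j < l)).card

/- ### Auxiliary lemmas -/

lemma ncard_Icc_nat (a b : ℕ) : (Set.Icc a b).ncard = b + 1 - a := by
  rw [← Finset.coe_Icc, Set.ncard_coe_finset, Nat.card_Icc]

lemma conj_finite (p : IdxPartition) {j : ℕ} (hj : 1 ≤ j) :
    {i : ℕ | 1 ≤ i ∧ j ≤ p.parts i}.Finite := by
  obtain ⟨N, hN⟩ := p.finite
  refine (Set.finite_Icc 1 N).subset ?_
  rintro i ⟨h1, h2⟩
  refine ⟨h1, ?_⟩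
  by_contra h
  push_neg at h
  have := hN i (le_of_lt h)
  omega

lemma le_conj (p : IdxPartition) {j i0 : ℕ} (hj : 1 ≤ j) (hi0 : 1 ≤ i0)
    (h : j ≤ p.parts i0) : i0 ≤ p.conj j := by
  have hsub : Set.Icc 1 i0 ⊆ {i : ℕ | 1 ≤ i ∧ j ≤ p.parts i} := by
    rintro i ⟨h1, h2⟩
    exact ⟨h1, le_trans h (p.antitone h1 h2)⟩
  have hcard := Set.ncard_le_ncard hsub (p.conj_finite hj)
  rw [IdxPartition.ncard_Icc_nat] at hcard
  unfold conj
  omega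

lemma conj_lt (p : IdxPartition) {j i0 : ℕ} (hj : 1 ≤ j) (hi0 : 1 ≤ i0)
    (h : p.parts i0 < j) : p.conj j < i0 := by
  have hsub : {i : ℕ | 1 ≤ i ∧ j ≤ p.parts i} ⊆ Set.Icc 1 (i0 - 1) := by
    rintro i ⟨h1, h2⟩
    refine ⟨h1, ?_⟩
    by_contra hh
    push_neg at hh
    have hle : i0 ≤ i := by omega
    have := p.antitone hi0 hle
    omega
  have hcard := Set.ncard_le_ncard hsub (Set.finite_Icc _ _)
  rw [IdxPartition.ncard_Icc_nat] at hcard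
  unfold conj
  omega

lemma conj_anti (p : IdxPartition) {j j' : ℕ} (hj : 1 ≤ j) (hjj : j ≤ j') :
    p.conj j' ≤ p.conj j := by
  apply Set.ncard_le_ncard _ (p.conj_finite hj)
  rintro i ⟨h1, h2⟩
  exact ⟨h1, le_trans hjj h2⟩

lemma hook_le (p : IdxPartition) {i j j' : ℕ} (hj : 1 ≤ j) (hjj : j ≤ j') :
    p.hook i j' ≤ p.hook i j := by
  unfold hook
  have h1 : p.parts i - j' ≤ p.parts i - j := Nat.sub_le_sub_left hjj _
  have h2 : p.conj j' - i ≤ p.conj j - i :=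
    Nat.sub_le_sub_right (p.conj_anti hj hjj) _
  omega

lemma smallHooks_le (p : IdxPartition) (l i : ℕ) : p.smallHooks l i ≤ p.parts i := by
  unfold smallHooks
  calc ((Finset.Icc 1 (p.parts i)).filter (fun j => p.hook i j < l)).card
      ≤ (Finset.Icc 1 (p.parts i)).card := Finset.card_filter_le _ _
    _ = p.parts i := by rw [Nat.card_Icc]; omega

lemma hook_ge_of_le (p : IdxPartition) (l : ℕ) {i j0 : ℕ} (hj0 : 1 ≤ j0)
    (h : j0 + p.smallHooks l i ≤ p.parts i) : l ≤ p.hook i j0 := by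
  by_contra hlt
  push_neg at hlt
  have hsub : Finset.Icc j0 (p.parts i) ⊆
      (Finset.Icc 1 (p.parts i)).filter (fun j => p.hook i j < l) := by
    intro j hj
    rw [Finset.mem_Icc] at hj
    rw [Finset.mem_filter, Finset.mem_Icc]
    exact ⟨⟨le_trans hj0 hj.1, hj.2⟩, lt_of_le_of_lt (p.hook_le hj0 hj.1) hlt⟩
  have hcard := Finset.card_le_card hsub
  rw [Nat.card_Icc] at hcard
  have hν : p.smallHooks l i =
      ((Finset.Icc 1 (p.parts i)).filter (fun j => p.hook i j < l)).card := rfl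
  omega

lemma hook_lt_of_gt (p : IdxPartition) (l : ℕ) {i j0 : ℕ}
    (h1 : p.parts i - p.smallHooks l i < j0) (h2 : j0 ≤ p.parts i) :
    p.hook i j0 < l := by
  by_contra hge
  push_neg at hge
  have hsub : (Finset.Icc 1 (p.parts i)).filter (fun j => p.hook i j < l) ⊆
      Finset.Icc (j0 + 1) (p.parts i) := by
    intro j hj
    rw [Finset.mem_filter, Finset.mem_Icc] at hj
    rw [Finset.mem_Icc]
    refine ⟨?_, hj.1.2⟩
    by_contra hh
    push_neg at hh
    have hmono : p.hook i j0 ≤ p.hook i j := p.hook_le hj.1.1 (by omega)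
    omega
  have hcard := Finset.card_le_card hsub
  rw [Nat.card_Icc] at hcard
  have hν : p.smallHooks l i =
      ((Finset.Icc 1 (p.parts i)).filter (fun j => p.hook i j < l)).card := rfl
  have hνle := p.smallHooks_le l i
  omega

lemma smallHooks_lt (p : IdxPartition) {l : ℕ} (hl : 1 ≤ l) (i : ℕ) :
    p.smallHooks l i < l := by
  rcases Nat.eq_zero_or_pos (p.smallHooks l i) with h | h
  · omega
  · have hνle := p.smallHooks_le l i
    have hj : p.hook i (p.parts i - p.smallHooks l i + 1) < l :=
      p.hook_lt_of_gt l (by omega) (by omega)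
    simp only [IdxPartition.hook] at hj
    omega

/-- The key recursion: for an `l`-admissible partition,
`λ_i = λ_{i + l - ν_i} + ν_i`. -/
lemma parts_rec (p : IdxPartition) {l : ℕ} (hl : 1 ≤ l) (hadm : p.admissible l)
    {i : ℕ} (hi : 1 ≤ i) :
    p.parts i = p.parts (i + (l - p.smallHooks l i)) + p.smallHooks l i := by
  have hνle := p.smallHooks_le l i
  have hνlt := p.smallHooks_lt hl i
  set ν := p.smallHooks l i with hν
  set k := i + (l - ν) with hk
  have hik : i ≤ k := by omega
  have hupper : p.parts k ≤ p.parts i - ν := by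
    rcases Nat.eq_zero_or_pos ν with h0 | h0
    · have := p.antitone hi hik
      omega
    · set j0 := p.parts i - ν + 1 with hj0
      have hj0le : j0 ≤ p.parts i := by omega
      have hhook : p.hook i j0 < l := p.hook_lt_of_gt l (by omega) hj0le
      have hconj : i ≤ p.conj j0 := p.le_conj (by omega) hi hj0le
      simp only [IdxPartition.hook] at hhook
      have hcl : p.conj j0 < k := by omega
      by_contra hc
      push_neg at hc
      have hle : j0 ≤ p.parts k := by omega
      have := p.le_conj (by omega) (by omega) hle
      omega
  have hlower : p.parts i - ν ≤ p.parts k := by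
    rcases Nat.eq_zero_or_pos (p.parts i - ν) with h0 | h0
    · omega
    · set m := p.parts i - ν with hm
      have hge : l ≤ p.hook i m := p.hook_ge_of_le l (by omega) (by omega)
      have hne : p.hook i m ≠ l := hadm i m ⟨hi, by omega, by omega⟩
      have hconj : i ≤ p.conj m := p.le_conj (by omega) hi (by omega)
      simp only [IdxPartition.hook] at hge hne
      have hkc : k ≤ p.conj m := by omega
      by_contra hc
      push_neg at hc
      have := p.conj_lt (j := m) (i0 := k) (by omega) (by omega) hc
      omega
  omega

end IdxPartition

/-- The auxiliary sequence `a_1 = 1`, `a_{i+1} = min(a_i + l - ν(a_i), r+1)`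
(here `aSeq l r ν i` is `a_{i+1}`). -/
def aSeq (l r : ℕ) (ν : ℕ → ℕ) : ℕ → ℕ
  | 0 => 1
  | i + 1 => min (aSeq l r ν i + (l - ν (aSeq l r ν i))) (r + 1)

lemma aSeq_pos (l r : ℕ) (ν : ℕ → ℕ) : ∀ i, 1 ≤ aSeq l r ν i
  | 0 => le_refl 1
  | i + 1 => by
    have := aSeq_pos l r ν i
    simp only [aSeq]
    exact le_min (by omega) (by omega)

lemma aSeq_stay {l r : ℕ} (ν : ℕ → ℕ) (hν : ∀ i, ν i < l) {i : ℕ}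
    (h : aSeq l r ν i = r + 1) : aSeq l r ν (i + 1) = r + 1 := by
  simp only [aSeq, h]
  have := hν (r + 1)
  exact Nat.min_eq_right (by omega)

lemma aSeq_le {l r : ℕ} (ν : ℕ → ℕ) (hν : ∀ i, ν i < l) {A : ℕ}
    (hA : aSeq l r ν A ≤ r) : ∀ i ≤ A, aSeq l r ν i ≤ r := by
  intro i hi
  by_contra h
  push_neg at h
  have hle : aSeq l r ν i ≤ r + 1 := by
    cases i with
    | zero =>
      have : aSeq l r ν 0 = 1 := rfl
      omega
    | succ n =>
      simp only [aSeq]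
      exact min_le_right _ _
  have heq : aSeq l r ν i = r + 1 := by omega
  have hall : ∀ j, aSeq l r ν (i + j) = r + 1 := by
    intro j
    induction j with
    | zero => simpa using heq
    | succ n ih => exact aSeq_stay ν hν ih
  have := hall (A - i)
  rw [Nat.add_sub_cancel' hi] at this
  omega

/-- For an `l`-admissible partition with at most `r` parts each at most `e-r`,
with `ν` the row counts of hooks `< l`, and `A` the largest index with
`a_A ≤ r`, one has `λ_{a_i} = Σ_{i ≤ j ≤ A} ν_{a_j}` for all `i ≤ A`. -/
theorem parts_eq_sum_smallHooks (e r l : ℕ) (hl : 1 ≤ l) (p : IdxPartition)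
    (hlen : ∀ i, r < i → p.parts i = 0)
    (hsize : p.parts 1 ≤ e - r)
    (hadm : p.admissible l)
    (A : ℕ)
    (hA : aSeq l r (p.smallHooks l) A ≤ r)
    (hA' : r < aSeq l r (p.smallHooks l) (A + 1)) :
    ∀ i ≤ A, p.parts (aSeq l r (p.smallHooks l) i) =
      ∑ j ∈ Finset.Icc i A, p.smallHooks l (aSeq l r (p.smallHooks l) j) := by
  have hνlt : ∀ i, p.smallHooks l i < l := fun i => p.smallHooks_lt hl i
  set a := aSeq l r (p.smallHooks l) with ha
  have hle : ∀ i ≤ A, a i ≤ r := aSeq_le _ hνlt hA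
  suffices H : ∀ d i, i + d = A →
      p.parts (a i) = ∑ j ∈ Finset.Icc i A, p.smallHooks l (a j) by
    intro i hi
    exact H (A - i) i (by omega)
  intro d
  induction d with
  | zero =>
    intro i hi
    have hiA : i = A := by omega
    rw [hiA, Finset.Icc_self, Finset.sum_singleton]
    have hpos : 1 ≤ a A := aSeq_pos l r _ A
    have hrec := p.parts_rec hl hadm hpos
    have hbig : r < a A + (l - p.smallHooks l (a A)) := by
      have hmin : a (A + 1) = min (a A + (l - p.smallHooks l (a A))) (r + 1) := rfl
      have := min_le_left (a A + (l - p.smallHooks l (a A))) (r + 1)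
      omega
    rw [hlen _ hbig] at hrec
    omega
  | succ d ih =>
    intro i hi
    have hi1 : i + 1 ≤ A := by omega
    have h2 := hle (i + 1) hi1
    have h1 : a (i + 1) = a i + (l - p.smallHooks l (a i)) := by
      have hmin : a (i + 1) = min (a i + (l - p.smallHooks l (a i))) (r + 1) := rfl
      rcases le_total (a i + (l - p.smallHooks l (a i))) (r + 1) with h | h
      · rw [hmin, min_eq_left h]
      · rw [hmin, min_eq_right h] at h2
        omega
    have hpos : 1 ≤ a i := aSeq_pos l r _ i
    have hrec := p.parts_rec hl hadm hpos
    rw [← h1] at hrec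
    have hins : Finset.Icc i A = insert i (Finset.Icc (i + 1) A) := by
      ext x
      simp only [Finset.mem_Icc, Finset.mem_insert]
      omega
    rw [hins, Finset.sum_insert (by simp only [Finset.mem_Icc]; omega)]
    rw [hrec, ih (i + 1) (by omega)]
    omega
end

section
/- Let l ≥ 1. Every l-admissible partition λ with at most 2 rows and λ_1 ≤ e−2 (where 'l-admissible' is with respect to hook lengths of the two-row diagram) satisfies either (λ_1 ≤ l−2 and λ_2 ≤ l−2) or λ_1 = λ_2 + l − 1; consequently, in the second case |λ| = 2λ_2 + l − 1. -/
/-- A partition: a weakly decreasing sequence of naturals (indexed from 1),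
eventually zero. -/
structure SeqPartition where
  parts : ℕ → ℕ
  antitone : ∀ ⦃i j : ℕ⦄, 1 ≤ i → i ≤ j → parts j ≤ parts i
  finite : ∃ N, ∀ i, N ≤ i → parts i = 0

namespace SeqPartition

/-- The conjugate partition: `conj p j` is the number of rows `i ≥ 1` with `parts i ≥ j`. -/
noncomputable def conj (p : SeqPartition) (j : ℕ) : ℕ :=
  Set.ncard {i : ℕ | 1 ≤ i ∧ j ≤ p.parts i}

/-- Hook length of the cell in row `i`, column `j`. -/
noncomputable def hook (p : SeqPartition) (i j : ℕ) : ℕ :=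
  (p.parts i - j) + (p.conj j - i) + 1

/-- The cell `(i,j)` belongs to the Young diagram of `p`. -/
def cell (p : SeqPartition) (i j : ℕ) : Prop :=
  1 ≤ i ∧ 1 ≤ j ∧ j ≤ p.parts i

/-- `p` is `l`-admissible: no cell has hook length `l`. -/
def admissible (p : SeqPartition) (l : ℕ) : Prop :=
  ∀ i j, p.cell i j → p.hook i j ≠ l

open Classical in
/-- Number of cells in row `i` whose hook length is `< l`. -/
noncomputable def smallHooks (p : SeqPartition) (l : ℕ) (i : ℕ) : ℕ :=
  ((Finset.Icc 1 (p.parts i)).filter (fun j => p.hook i j < l)).card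

end SeqPartition

/-- Classification of `l`-admissible partitions with at most two rows and
`λ_1 ≤ e - 2`: either both parts are `≤ l - 2`, or `λ_1 = λ_2 + l - 1`,
in which case `|λ| = 2λ_2 + l - 1`. -/
theorem two_row_admissible (p : SeqPartition) (l e : ℕ) (hl : 1 ≤ l)
    (hlen : ∀ i, 2 < i → p.parts i = 0)
    (hsize : p.parts 1 ≤ e - 2)
    (hadm : p.admissible l) :
    (p.parts 1 ≤ l - 2 ∧ p.parts 2 ≤ l - 2) ∨
    (p.parts 1 = p.parts 2 + (l - 1) ∧
      p.parts 1 + p.parts 2 = 2 * p.parts 2 + (l - 1)) := by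
  set a := p.parts 1 with ha
  set b := p.parts 2 with hb
  have hba : b ≤ a := p.antitone le_rfl one_le_two
  have hc2 : ∀ j, 1 ≤ j → j ≤ b → p.conj j = 2 := by
    intro j hj1 hjb
    have hset : {i : ℕ | 1 ≤ i ∧ j ≤ p.parts i} = {1, 2} := by
      ext i
      simp only [Set.mem_setOf_eq, Set.mem_insert_iff, Set.mem_singleton_iff]
      constructor
      · rintro ⟨h1, h2⟩
        by_contra hcon
        push_neg at hcon
        have : 2 < i := by omega
        rw [hlen i this] at h2
        omega
      · rintro (rfl | rfl)
        · exact ⟨le_rfl, le_trans hjb hba⟩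
        · exact ⟨one_le_two, hjb⟩
    rw [SeqPartition.conj, hset, Set.ncard_pair (by norm_num)]
  have hc1 : ∀ j, b < j → j ≤ a → p.conj j = 1 := by
    intro j hjb hja
    have hset : {i : ℕ | 1 ≤ i ∧ j ≤ p.parts i} = {1} := by
      ext i
      simp only [Set.mem_setOf_eq, Set.mem_singleton_iff]
      constructor
      · rintro ⟨h1, h2⟩
        by_contra hcon
        rcases Nat.lt_or_ge i 3 with hi | hi
        · interval_cases i
          · omega
          · omega
        · rw [hlen i (by omega)] at h2; omega
      · rintro rfl
        exact ⟨le_rfl, hja⟩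
    rw [SeqPartition.conj, hset, Set.ncard_singleton]
  -- row 2 hooks give l > b
  have hlb : b < l := by
    by_contra h
    push_neg at h
    have := hadm 2 (b + 1 - l) ⟨one_le_two, by omega, by omega⟩
    rw [SeqPartition.hook, hc2 _ (by omega) (by omega)] at this
    omega
  -- arm hooks of row 1 give a - b < l
  have hl1 : a - b < l := by
    by_contra h
    push_neg at h
    have := hadm 1 (a + 1 - l) ⟨le_rfl, by omega, by omega⟩
    rw [SeqPartition.hook, hc1 _ (by omega) (by omega)] at this
    omega
  by_cases hcase : a = b + (l - 1)
  · right
    exact ⟨hcase, by omega⟩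
  · left
    -- then a - b ≤ l - 2; show a ≤ l - 2
    by_contra hcon
    push_neg at hcon
    have hal : ¬ a ≤ l - 2 := by omega
    -- so l ≤ a + 1; use cell (1, a+2-l) with hook a - j + 2 = l
    have := hadm 1 (a + 2 - l) ⟨le_rfl, by omega, by omega⟩
    rw [SeqPartition.hook, hc2 _ (by omega) (by omega)] at this
    omega
end
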